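/- arXiv:2211.09749 — 3 statements merged into one kernel-verified Lean document; each statement's English description precedes it below -/
import Mathlib

section
/- The function H(x) = e^{√2 x} / (1 + e^{2√2 x})^{1/2} is a stationary solution of the φ⁶ field equation: H''(x) = U'(H(x)) for all real x, where U(φ) = φ²(1-φ²)². -/
open Real MeasureTheory

noncomputable def U (φ : ℝ) : ℝ := φ ^ 2 * (1 - φ ^ 2) ^ 2

noncomputable def H (x : ℝ) : ℝ :=
  Real.exp (Real.sqrt 2 * x) / Real.sqrt (1 + Real.exp (2 * Real.sqrt 2 * x))

/-!
The kink solves the first-order (Bogomolny) equation `H' = F(H)` with `F(φ) = √2 φ (1 - φ²)`,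
and `U = F² / 2`. Differentiating the first-order equation once more gives
`H'' = F'(H) H' = F'(H) F(H) = (F² / 2)'(H) = U'(H)`.
-/

theorem deriv_deriv_eq_deriv_half_sq_of_hasDerivAt {f F : ℝ → ℝ}
    (hf : ∀ x, HasDerivAt f (F (f x)) x) (hF : Differentiable ℝ F) (x : ℝ) :
    deriv (deriv f) x = deriv (fun φ => F φ ^ 2 / 2) (f x) := by
  have hderiv : deriv f = F ∘ f := funext fun y => (hf y).deriv
  have hsecond : HasDerivAt (F ∘ f) (deriv F (f x) * F (f x)) x :=
    (hF (f x)).hasDerivAt.comp x (hf x)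
  have hhalf_sq : HasDerivAt (fun φ => F φ ^ 2 / 2) (deriv F (f x) * F (f x)) (f x) := by
    refine (((hF (f x)).hasDerivAt.fun_pow 2).div_const 2).congr_deriv ?_
    ring
  rw [hderiv, hsecond.deriv, hhalf_sq.deriv]

theorem U_eq_half_sq : U = fun φ => (√2 * φ * (1 - φ ^ 2)) ^ 2 / 2 := by
  funext φ
  rw [U, mul_pow, mul_pow, sq_sqrt zero_le_two]
  ring

theorem hasDerivAt_H (x : ℝ) : HasDerivAt H (√2 * H x * (1 - H x ^ 2)) x := by
  have hexp_sq : exp (2 * √2 * x) = exp (√2 * x) ^ 2 := by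
    rw [sq, ← exp_add]; ring_nf
  have hnum : HasDerivAt (fun y => exp (√2 * y)) (exp (√2 * x) * √2) x :=
    ((hasDerivAt_id x).const_mul √2).exp.congr_deriv (by simp)
  have hden : HasDerivAt (fun y => √(1 + exp (2 * √2 * y)))
      (exp (2 * √2 * x) * (2 * √2) / (2 * √(1 + exp (2 * √2 * x)))) x :=
    (((hasDerivAt_id x).const_mul (2 * √2)).exp.const_add 1).sqrt
      (by positivity) |>.congr_deriv (by simp)
  refine (hnum.div hden (by positivity)).congr_deriv ?_
  simp only [H, hexp_sq]
  field_simp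

theorem kink_is_stationary_solution :
    ∀ x : ℝ, deriv (deriv H) x = deriv U (H x) := by
  intro x
  rw [U_eq_half_sq]
  exact deriv_deriv_eq_deriv_half_sq_of_hasDerivAt hasDerivAt_H (by fun_prop) x
end

section
/- For any real numbers x₁ < x₂ with z = x₂ - x₁, any α, β > 0 with α ≠ β, and any natural number m, there exists a constant C depending only on α, β, m such that ∫_ℝ |x - x₁|^m e^{-α(x-x₁)₊} e^{-β(x₂-x)₊} dx ≤ C · max((1 + z^m) e^{-αz}, e^{-βz}), where y₊ = max(y, 0). -/
/-!
Put `z = x₂ - x₁` and `c = min (min α β) |α - β| > 0`. Checking the three linear pieces, the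
exponent `α (x - x₁)₊ + β (x₂ - x)₊` is at least `β z + c |x - x₁|` if `β < α` and at least
`α z + c |x - x₂|` if `α < β`. So the integral is at most `e^{-βz}`, resp. `e^{-αz}`, times a
moment `∫ |x - x₁|^m e^{-c |x - b|} dx` with `b = x₁`, resp. `b = x₂`, and the triangle inequality
`|x - x₁| ≤ |x - b| + |b - x₁|` bounds such a moment by a multiple of `1 + |b - x₁|^m`.
-/

open Real MeasureTheory Set

lemma integrable_comp_abs_of_integrableOn_Ioi {f : ℝ → ℝ} (hf : IntegrableOn f (Ioi 0)) :
    Integrable fun x => f |x| := by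
  have hIoi : IntegrableOn (fun x => f |x|) (Ioi 0) :=
    hf.congr_fun (fun x hx => by rw [abs_of_pos hx]) measurableSet_Ioi
  have hIic : IntegrableOn (fun x => f |x|) (Iic 0) := by
    have hneg : MeasurableEmbedding fun x : ℝ => -x := (Homeomorph.neg ℝ).measurableEmbedding
    rw [← Measure.map_neg_eq_self (volume : Measure ℝ), hneg.integrableOn_map_iff]
    simp_rw [Function.comp_def, abs_neg, neg_preimage, neg_Iic, neg_zero]
    exact Iff.mpr integrableOn_Ici_iff_integrableOn_Ioi hIoi
  simpa [Iic_union_Ioi] using hIic.union hIoi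

section ExponentialMoments

variable {c : ℝ} (m : ℕ)

lemma abs_sub_pow_mul_exp_le (a b x : ℝ) :
    |x - a| ^ m * exp (-c * |x - b|) ≤
      2 ^ (m - 1) * (|x - b| ^ m * exp (-c * |x - b|) + |b - a| ^ m * exp (-c * |x - b|)) := by
  have hpow : |x - a| ^ m ≤ 2 ^ (m - 1) * (|x - b| ^ m + |b - a| ^ m) :=
    (pow_le_pow_left₀ (abs_nonneg _) (abs_sub_le x b a) m).trans
      (add_pow_le (abs_nonneg _) (abs_nonneg _) m)
  calc |x - a| ^ m * exp (-c * |x - b|)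
      ≤ 2 ^ (m - 1) * (|x - b| ^ m + |b - a| ^ m) * exp (-c * |x - b|) := by gcongr
    _ = _ := by ring

lemma integrable_abs_pow_mul_exp_neg_mul_abs (hc : 0 < c) :
    Integrable fun x : ℝ => |x| ^ m * exp (-c * |x|) := by
  refine integrable_comp_abs_of_integrableOn_Ioi (f := fun x => x ^ m * exp (-c * x)) ?_
  refine (integrableOn_rpow_mul_exp_neg_mul_rpow (p := 1) (s := m)
    (by linarith [m.cast_nonneg (α := ℝ)]) one_pos hc).congr_fun (fun x _ => ?_) measurableSet_Ioi
  simp [Real.rpow_natCast]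

lemma integrable_exp_neg_mul_abs (hc : 0 < c) : Integrable fun x : ℝ => exp (-c * |x|) := by
  simpa using integrable_abs_pow_mul_exp_neg_mul_abs 0 hc

lemma integrable_abs_sub_pow_add_mul_exp (hc : 0 < c) (a b : ℝ) :
    Integrable fun x =>
      2 ^ (m - 1) * (|x - b| ^ m * exp (-c * |x - b|) + |b - a| ^ m * exp (-c * |x - b|)) :=
  (((integrable_abs_pow_mul_exp_neg_mul_abs m hc).comp_sub_right b).add
    (((integrable_exp_neg_mul_abs hc).comp_sub_right b).const_mul _)).const_mul _

lemma integrable_abs_sub_pow_mul_exp_neg_mul_abs_sub (hc : 0 < c) (a b : ℝ) :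
    Integrable fun x => |x - a| ^ m * exp (-c * |x - b|) :=
  (integrable_abs_sub_pow_add_mul_exp m hc a b).mono' (by fun_prop)
    (.of_forall fun x => by
      rw [Real.norm_of_nonneg (by positivity)]; exact abs_sub_pow_mul_exp_le m a b x)

lemma exists_integral_abs_sub_pow_mul_exp_neg_mul_abs_sub_le (hc : 0 < c) :
    ∃ C > 0, ∀ a b : ℝ, ∫ x, |x - a| ^ m * exp (-c * |x - b|) ≤ C * (1 + |b - a| ^ m) := by
  set K := ∫ x, |x| ^ m * exp (-c * |x|)
  set K₀ := ∫ x, exp (-c * |x|)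
  have hK : 0 ≤ K := integral_nonneg fun x => by positivity
  have hK₀ : 0 < K₀ := integral_exp_pos (integrable_exp_neg_mul_abs hc)
  refine ⟨2 ^ (m - 1) * (K + K₀), by positivity, fun a b => ?_⟩
  have hd : 0 ≤ |b - a| ^ m := by positivity
  calc ∫ x, |x - a| ^ m * exp (-c * |x - b|)
      ≤ ∫ x, 2 ^ (m - 1) * (|x - b| ^ m * exp (-c * |x - b|) +
          |b - a| ^ m * exp (-c * |x - b|)) :=
        integral_mono_of_nonneg (.of_forall fun x => by positivity)
          (integrable_abs_sub_pow_add_mul_exp m hc a b)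
          (.of_forall (abs_sub_pow_mul_exp_le m a b))
    _ = 2 ^ (m - 1) * (K + |b - a| ^ m * K₀) := by
        rw [integral_const_mul, integral_add
          ((integrable_abs_pow_mul_exp_neg_mul_abs m hc).comp_sub_right b)
          (((integrable_exp_neg_mul_abs hc).comp_sub_right b).const_mul _), integral_const_mul,
          integral_sub_right_eq_self (fun x => |x| ^ m * exp (-c * |x|)),
          integral_sub_right_eq_self (fun x => exp (-c * |x|))]
    _ ≤ 2 ^ (m - 1) * (K + K₀) * (1 + |b - a| ^ m) := by
        rw [mul_assoc]; gcongr; nlinarith [mul_nonneg hK hd]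

end ExponentialMoments

lemma mul_add_mul_abs_le_mul_max_add_mul_max {α β c z t : ℝ} (hz : 0 ≤ z) (hβ : 0 ≤ β)
    (hcβ : c ≤ β) (hcαβ : c ≤ α - β) :
    β * z + c * |t| ≤ α * max t 0 + β * max (z - t) 0 := by
  rcases le_total t 0 with ht | ht
  · rw [max_eq_right ht, abs_of_nonpos ht, max_eq_left (by linarith)]
    nlinarith
  · rw [max_eq_left ht, abs_of_nonneg ht]
    rcases le_total t z with htz | hzt
    · rw [max_eq_left (by linarith)]; nlinarith
    · rw [max_eq_right (by linarith)]; nlinarith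

section InteractionIntegral

variable {α β c x₁ x₂ : ℝ} (m : ℕ)

lemma integral_interaction_le_left (hc : 0 < c) (h : x₁ ≤ x₂) (hβ : 0 ≤ β) (hcβ : c ≤ β)
    (hcαβ : c ≤ α - β) :
    ∫ x, |x - x₁| ^ m * exp (-α * max (x - x₁) 0) * exp (-β * max (x₂ - x) 0) ≤
      exp (-β * (x₂ - x₁)) * ∫ x, |x - x₁| ^ m * exp (-c * |x - x₁|) := by
  rw [← integral_const_mul]
  refine integral_mono_of_nonneg (.of_forall fun x => by positivity)
    ((integrable_abs_sub_pow_mul_exp_neg_mul_abs_sub m hc x₁ x₁).const_mul _)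
    (.of_forall fun x => ?_)
  have key := mul_add_mul_abs_le_mul_max_add_mul_max (t := x - x₁) (sub_nonneg.2 h) hβ hcβ hcαβ
  rw [sub_sub_sub_cancel_right] at key
  dsimp only
  rw [mul_assoc, ← exp_add, mul_left_comm, ← exp_add]
  exact mul_le_mul_of_nonneg_left (exp_le_exp.2 (by linarith)) (by positivity)

lemma integral_interaction_le_right (hc : 0 < c) (h : x₁ ≤ x₂) (hα : 0 ≤ α) (hcα : c ≤ α)
    (hcβα : c ≤ β - α) :
    ∫ x, |x - x₁| ^ m * exp (-α * max (x - x₁) 0) * exp (-β * max (x₂ - x) 0) ≤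
      exp (-α * (x₂ - x₁)) * ∫ x, |x - x₁| ^ m * exp (-c * |x - x₂|) := by
  rw [← integral_const_mul]
  refine integral_mono_of_nonneg (.of_forall fun x => by positivity)
    ((integrable_abs_sub_pow_mul_exp_neg_mul_abs_sub m hc x₁ x₂).const_mul _)
    (.of_forall fun x => ?_)
  have key := mul_add_mul_abs_le_mul_max_add_mul_max (t := x₂ - x) (sub_nonneg.2 h) hα hcα hcβα
  rw [sub_sub_sub_cancel_left, abs_sub_comm] at key
  dsimp only
  rw [mul_assoc, ← exp_add, mul_left_comm, ← exp_add]
  exact mul_le_mul_of_nonneg_left (exp_le_exp.2 (by linarith)) (by positivity)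

end InteractionIntegral

theorem interaction_integral_bound (α β : ℝ) (m : ℕ) (hα : 0 < α) (hβ : 0 < β)
    (hαβ : α ≠ β) :
    ∃ C : ℝ, 0 < C ∧ ∀ x₁ x₂ : ℝ, x₁ < x₂ →
      (∫ x : ℝ, |x - x₁| ^ m * Real.exp (-α * max (x - x₁) 0) *
          Real.exp (-β * max (x₂ - x) 0)) ≤
        C * max ((1 + (x₂ - x₁) ^ m) * Real.exp (-α * (x₂ - x₁)))
          (Real.exp (-β * (x₂ - x₁))) := by
  set c := min (min α β) |α - β|
  have hc : 0 < c := lt_min (lt_min hα hβ) (abs_pos.2 (sub_ne_zero.2 hαβ))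
  have hcα : c ≤ α := (min_le_left _ _).trans (min_le_left _ _)
  have hcβ : c ≤ β := (min_le_left _ _).trans (min_le_right _ _)
  obtain ⟨C, hC, hmoment⟩ := exists_integral_abs_sub_pow_mul_exp_neg_mul_abs_sub_le m hc
  refine ⟨2 * C, by positivity, fun x₁ x₂ h => ?_⟩
  set A := (1 + (x₂ - x₁) ^ m) * exp (-α * (x₂ - x₁))
  set B := exp (-β * (x₂ - x₁))
  have hmax : 0 ≤ C * max A B := by positivity
  rcases hαβ.lt_or_gt with hlt | hgt
  · have hcβα : c ≤ β - α := (min_le_right _ _).trans_eq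
      ((abs_sub_comm α β).trans (abs_of_pos (sub_pos.2 hlt)))
    calc _ ≤ exp (-α * (x₂ - x₁)) * (C * (1 + |x₂ - x₁| ^ m)) := by
          grw [integral_interaction_le_right m hc h.le hα.le hcα hcβα, hmoment x₁ x₂]
      _ ≤ 2 * C * max A B := by
          rw [abs_of_pos (sub_pos.2 h)]
          nlinarith [mul_le_mul_of_nonneg_left (le_max_left A B) hC.le]
  · have hcαβ : c ≤ α - β := (min_le_right _ _).trans_eq (abs_of_pos (sub_pos.2 hgt))
    calc _ ≤ B * (C * (1 + |x₁ - x₁| ^ m)) := by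
          grw [integral_interaction_le_left m hc h.le hβ.le hcβ hcαβ, hmoment x₁ x₁]
      _ ≤ 2 * C * max A B := by
          rw [sub_self, abs_zero]
          have hCB : 0 ≤ C * B := by positivity
          nlinarith [mul_le_mul_of_nonneg_left (le_max_right A B) hC.le,
            mul_le_mul_of_nonneg_left (zero_pow_le_one m) hCB]
end

section
/- For every 0 < v < 1 and every real t, the determinant of the 4×4 matrix whose columns are L₁(t), L₂(t), L₃(t), L₄(t) (as defined from the fundamental system of the two-kink linearized ODE) equals -√2 v, independent of t. -/
/-!
Swapping the middle two rows makes the matrix block diagonal, with a unipotent block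
coming from `L₃, L₄`, so the determinant is minus the 2×2 Wronskian of the kink solutions
`L₁, L₂`.  With `x = √2 v t` that Wronskian is `√2 v (tanh² x + sech² x) = √2 v`.
-/

open Real

theorem Matrix.det_fin_four_of_swapped_blocks {R : Type*} [CommRing R] (a b c d s : R) :
    Matrix.det !![a, b, 0, 0; 0, 0, 1, s; c, d, 0, 0; 0, 0, 0, 1] = -(a * d - b * c) := by
  simp [Matrix.det_succ_row_zero, Fin.sum_univ_succ, Fin.succAbove]
  ring

theorem Real.tanh_sq_add_inv_cosh_sq (x : ℝ) : tanh x ^ 2 + (1 / cosh x) ^ 2 = 1 := by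
  have hc : cosh x ≠ 0 := (cosh_pos x).ne'
  rw [tanh_eq_sinh_div_cosh]
  field_simp
  linear_combination sinh_sq x

theorem Real.wronskian_tanh_kink (k x : ℝ) :
    tanh x * (k * x * (1 / cosh x) ^ 2 + k * tanh x) - (x * tanh x - 1) * (k * (1 / cosh x) ^ 2)
      = k := by
  linear_combination k * tanh_sq_add_inv_cosh_sq x

theorem wronskian_determinant_general (v t : ℝ) :
    Matrix.det
      !![Real.tanh (Real.sqrt 2 * v * t),
          Real.sqrt 2 * v * t * Real.tanh (Real.sqrt 2 * v * t) - 1, 0, 0;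
        0, 0, 1, t;
        Real.sqrt 2 * v * (1 / Real.cosh (Real.sqrt 2 * v * t)) ^ 2,
          2 * v ^ 2 * t * (1 / Real.cosh (Real.sqrt 2 * v * t)) ^ 2 +
            Real.sqrt 2 * v * Real.tanh (Real.sqrt 2 * v * t), 0, 0;
        0, 0, 0, 1] = -(Real.sqrt 2 * v) := by
  have h_coeff : 2 * v ^ 2 * t = Real.sqrt 2 * v * (Real.sqrt 2 * v * t) := by
    linear_combination -(v ^ 2 * t) * Real.sq_sqrt (zero_le_two : (0 : ℝ) ≤ 2)
  rw [Matrix.det_fin_four_of_swapped_blocks, h_coeff, Real.wronskian_tanh_kink]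

theorem wronskian_determinant (v t : ℝ) (hv0 : 0 < v) (hv1 : v < 1) :
    Matrix.det
      !![Real.tanh (Real.sqrt 2 * v * t),
          Real.sqrt 2 * v * t * Real.tanh (Real.sqrt 2 * v * t) - 1, 0, 0;
        0, 0, 1, t;
        Real.sqrt 2 * v * (1 / Real.cosh (Real.sqrt 2 * v * t)) ^ 2,
          2 * v ^ 2 * t * (1 / Real.cosh (Real.sqrt 2 * v * t)) ^ 2 +
            Real.sqrt 2 * v * Real.tanh (Real.sqrt 2 * v * t), 0, 0;
        0, 0, 0, 1] = -(Real.sqrt 2 * v) :=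
  wronskian_determinant_general v t
end
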